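/- Let 0 < q < 1, s ∈ ℝ and n ∈ ℕ. Then s·(D_q² H_n)(x,s|q) - q^{2-n}·x·(D_q H_n)(x,s|q) + q^{2-n}·{n}_q·H_n(x,s|q) = 0 as polynomials in x, where q^{2-n} denotes the real power of q and D_q² is the twice-iterated q-derivative. -/

import Mathlib

/-- The q-number `{n}_q = 1 + q + ⋯ + q^{n-1}`. -/
noncomputable def qNum (q : ℝ) (n : ℕ) : ℝ := ∑ k ∈ Finset.range n, q ^ k

/-- The q-factorial `{n}_q! = Π_{k=1}^n {k}_q`. -/
noncomputable def qFact (q : ℝ) (n : ℕ) : ℝ := ∏ k ∈ Finset.range n, qNum q (k + 1)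

/-- The even q-double factorial `{2k}_q!! = Π_{l=1}^k {2l}_q`. -/
noncomputable def qDoubleFact (q : ℝ) (k : ℕ) : ℝ := ∏ l ∈ Finset.range k, qNum q (2 * (l + 1))

/-- The q-Hermite polynomial `H_n(x,s|q) = Σ_{k=0}^{⌊n/2⌋} (-1)^k q^{k(k-1)}
({n}_q!/({n-2k}_q!·{2k}_q!!)) s^k x^{n-2k}`. -/
noncomputable def qHermite (q s : ℝ) (n : ℕ) : Polynomial ℝ :=
  ∑ k ∈ Finset.range (n / 2 + 1),
    Polynomial.C ((-1 : ℝ) ^ k * q ^ (k * (k - 1)) *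
        (qFact q n / (qFact q (n - 2 * k) * qDoubleFact q k)) * s ^ k) *
      Polynomial.X ^ (n - 2 * k)

/-- The q-derivative on polynomials: it sends `x^j` to `{j}_q x^{j-1}`. -/
noncomputable def qDeriv (q : ℝ) (f : Polynomial ℝ) : Polynomial ℝ :=
  f.sum fun j a => Polynomial.C (a * qNum q j) * Polynomial.X ^ (j - 1)

/-!
Writing `H_n = Σ_k c_k x^{n-2k}`, the operator `L = s D_q² - q^{2-n} x D_q + q^{2-n} {n}_q` sends
`c_k x^{n-2k}` to `s c_k {n-2k}_q {n-2k-1}_q x^{n-2k-2} + q^{2-n} ({n}_q - {n-2k}_q) c_k x^{n-2k}`.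
Since `{n}_q - {n-2k-2}_q = q^{n-2k-2} {2k+2}_q`, the ratio `c_{k+1} / c_k` makes the first part of
the `k`-th image cancel the second part of the `(k+1)`-st, and the sum telescopes to zero.
-/

open Polynomial Finset

lemma qNum_zero (q : ℝ) : qNum q 0 = 0 := by simp [qNum]

lemma qNum_pos {q : ℝ} (hq : 0 < q) {n : ℕ} (hn : 0 < n) : 0 < qNum q n :=
  sum_pos (fun i _ => pow_pos hq i) (by simpa using hn.ne')

lemma qNum_add (q : ℝ) (a b : ℕ) : qNum q (a + b) = qNum q a + q ^ a * qNum q b := by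
  simp [qNum, sum_range_add, mul_sum, pow_add]

lemma qFact_pos {q : ℝ} (hq : 0 < q) (n : ℕ) : 0 < qFact q n :=
  prod_pos fun i _ => qNum_pos hq i.succ_pos

lemma qDoubleFact_pos {q : ℝ} (hq : 0 < q) (k : ℕ) : 0 < qDoubleFact q k :=
  prod_pos fun _ _ => qNum_pos hq (by positivity)

lemma qFact_succ (q : ℝ) (n : ℕ) : qFact q (n + 1) = qFact q n * qNum q (n + 1) :=
  prod_range_succ _ _

lemma qDoubleFact_succ (q : ℝ) (k : ℕ) :
    qDoubleFact q (k + 1) = qDoubleFact q k * qNum q (2 * (k + 1)) :=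
  prod_range_succ _ _

lemma qDeriv_C_mul_X_pow (q a : ℝ) (m : ℕ) :
    qDeriv q (C a * X ^ m) = C (a * qNum q m) * X ^ (m - 1) := by
  rw [C_mul_X_pow_eq_monomial, qDeriv, sum_monomial_index]
  simp

lemma qDeriv_add (q : ℝ) (f g : ℝ[X]) : qDeriv q (f + g) = qDeriv q f + qDeriv q g :=
  sum_add_index f g _ (by simp) (by simp [add_mul])

lemma qDeriv_sum {ι : Type*} (q : ℝ) (t : Finset ι) (f : ι → ℝ[X]) :
    qDeriv q (∑ i ∈ t, f i) = ∑ i ∈ t, qDeriv q (f i) :=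
  map_sum (AddMonoidHom.mk' (qDeriv q) (qDeriv_add q)) f t

lemma qDifference_C_mul_X_pow (q s β ν a : ℝ) (m : ℕ) :
    C s * qDeriv q (qDeriv q (C a * X ^ m)) - C β * X * qDeriv q (C a * X ^ m) +
        C (β * ν) * (C a * X ^ m) =
      C (s * a * qNum q m * qNum q (m - 1)) * X ^ (m - 2) +
        C (β * (ν - qNum q m) * a) * X ^ m := by
  rw [qDeriv_C_mul_X_pow, qDeriv_C_mul_X_pow]
  rcases m with _ | m
  · simp [qNum_zero]
  · rw [Nat.add_sub_cancel, show m + 1 - 2 = m - 1 by omega]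
    simp only [map_mul, map_sub, pow_succ' X m]
    ring

lemma sum_range_succ_add_eq_zero {M : Type*} [AddCommMonoid M] {f g : ℕ → M} {K : ℕ}
    (hg : g 0 = 0) (hf : f K = 0) (h : ∀ k < K, f k + g (k + 1) = 0) :
    ∑ k ∈ range (K + 1), (f k + g k) = 0 := by
  rw [sum_add_distrib, sum_range_succ f, sum_range_succ' g, hf, hg, add_zero, add_zero,
    ← sum_add_distrib]
  exact sum_eq_zero fun k hk => h k (mem_range.1 hk)

noncomputable def qHermiteCoeff (q s : ℝ) (n k : ℕ) : ℝ :=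
  (-1 : ℝ) ^ k * q ^ (k * (k - 1)) *
    (qFact q n / (qFact q (n - 2 * k) * qDoubleFact q k)) * s ^ k

lemma qHermite_eq_sum (q s : ℝ) (n : ℕ) :
    qHermite q s n = ∑ k ∈ range (n / 2 + 1), C (qHermiteCoeff q s n k) * X ^ (n - 2 * k) :=
  rfl

lemma qHermiteCoeff_succ {q : ℝ} (hq : 0 < q) (s : ℝ) {n k : ℕ} (hk : 2 * (k + 1) ≤ n) :
    qNum q (2 * (k + 1)) * qHermiteCoeff q s n (k + 1) =
      -(q ^ (2 * k) * s * qNum q (n - 2 * k) * qNum q (n - 2 * k - 1)) *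
        qHermiteCoeff q s n k := by
  obtain ⟨m, rfl⟩ := Nat.exists_eq_add_of_le' hk
  have hexp : q ^ ((k + 1) * (k + 1 - 1)) = q ^ (k * (k - 1)) * q ^ (2 * k) := by
    rw [← pow_add]
    congr 1
    cases k with
    | zero => rfl
    | succ k => simp only [Nat.add_sub_cancel]; ring
  unfold qHermiteCoeff
  rw [hexp]
  simp only [Nat.add_sub_cancel, qFact_succ, qDoubleFact_succ,
    show m + 2 * (k + 1) - 2 * k = m + 1 + 1 by omega]
  have := qNum_pos hq (n := m + 1) (by omega)
  have := qNum_pos hq (n := m + 1 + 1) (by omega)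
  have := qNum_pos hq (n := 2 * (k + 1)) (by omega)
  have := qFact_pos hq m
  have := qDoubleFact_pos hq k
  field_simp
  ring

lemma qHermiteCoeff_cancel {q : ℝ} (hq : 0 < q) (s : ℝ) {n k : ℕ} (hk : 2 * (k + 1) ≤ n) :
    s * qHermiteCoeff q s n k * qNum q (n - 2 * k) * qNum q (n - 2 * k - 1) +
      q ^ ((2 : ℤ) - n) * (qNum q n - qNum q (n - 2 * (k + 1))) * qHermiteCoeff q s n (k + 1) =
        0 := by
  have hdiff :
      qNum q n - qNum q (n - 2 * (k + 1)) = q ^ (n - 2 * (k + 1)) * qNum q (2 * (k + 1)) := by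
    have := qNum_add q (n - 2 * (k + 1)) (2 * (k + 1))
    rw [Nat.sub_add_cancel hk] at this
    linarith
  have hpow : q ^ ((2 : ℤ) - n) * q ^ (n - 2 * (k + 1)) * q ^ (2 * k) = 1 := by
    rw [mul_assoc, ← pow_add, ← zpow_natCast, ← zpow_add₀ hq.ne',
      show (2 : ℤ) - n + ((n - 2 * (k + 1) + 2 * k : ℕ) : ℤ) = 0 by omega, zpow_zero]
  rw [hdiff]
  linear_combination q ^ ((2 : ℤ) - n) * q ^ (n - 2 * (k + 1)) * qHermiteCoeff_succ hq s hk -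
    s * qNum q (n - 2 * k) * qNum q (n - 2 * k - 1) * qHermiteCoeff q s n k * hpow

theorem qHermite_qDifference_equation_general (q : ℝ) (hq0 : 0 < q) (s : ℝ) (n : ℕ) :
    Polynomial.C s * qDeriv q (qDeriv q (qHermite q s n)) -
        Polynomial.C (q ^ ((2 : ℤ) - (n : ℤ))) * Polynomial.X * qDeriv q (qHermite q s n) +
        Polynomial.C (q ^ ((2 : ℤ) - (n : ℤ)) * qNum q n) * qHermite q s n = 0 := by
  simp only [qHermite_eq_sum, qDeriv_sum, mul_sum, ← sum_sub_distrib, ← sum_add_distrib,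
    qDifference_C_mul_X_pow]
  refine sum_range_succ_add_eq_zero (by simp) ?_ fun k hk => ?_
  · rcases Nat.mod_two_eq_zero_or_one n with h | h
    · simp [show n - 2 * (n / 2) = 0 by omega, qNum_zero]
    · simp [show n - 2 * (n / 2) - 1 = 0 by omega, qNum_zero]
  · rw [show n - 2 * k - 2 = n - 2 * (k + 1) by omega, ← add_mul, ← C_add,
      qHermiteCoeff_cancel hq0 s (by omega), C_0, zero_mul]

/-- q-difference equation:
`s·D_q² H_n(x,s|q) - q^{2-n}·x·D_q H_n(x,s|q) + q^{2-n}·{n}_q·H_n(x,s|q) = 0`. -/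
theorem qHermite_qDifference_equation (q : ℝ) (hq0 : 0 < q) (hq1 : q < 1) (s : ℝ) (n : ℕ) :
    Polynomial.C s * qDeriv q (qDeriv q (qHermite q s n)) -
        Polynomial.C (q ^ ((2 : ℤ) - (n : ℤ))) * Polynomial.X * qDeriv q (qHermite q s n) +
        Polynomial.C (q ^ ((2 : ℤ) - (n : ℤ)) * qNum q n) * qHermite q s n = 0 :=
  qHermite_qDifference_equation_general q hq0 s n
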